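/- With the Lie algebra of the previous setting ([E1,E2]=2kξ, [E2,ξ]=−(λ+c)E1, [ξ,E1]=(λ−c)E2, orthonormal frame (ξ,E1,E2)), the principal Ricci curvatures are Ric(ξ,ξ) = 2(k²−λ²), Ric(E1,E1) = −2(k+c)(k−λ), Ric(E2,E2) = −2(k+c)(k+λ), and the scalar curvature equals −2(k²+λ²) − 4kc. -/

import Mathlib

/-!
Since `(ξ, E1, E2)` is orthonormal, the Koszul formula determines every component of `∇_X Y`, so
the connection is an explicit bilinear map. Expanding `R(X,Y)Z = ∇_X ∇_Y Z - ∇_Y ∇_X Z - ∇_[X,Y] Z`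
then shows that the Ricci form is diagonal in this frame, and the principal curvatures and their
sum are read off its coefficients.
-/

noncomputable section

def ξ : Fin 3 → ℝ := ![1, 0, 0]
def E1 : Fin 3 → ℝ := ![0, 1, 0]
def E2 : Fin 3 → ℝ := ![0, 0, 1]

def ip (x y : Fin 3 → ℝ) : ℝ := x 0 * y 0 + x 1 * y 1 + x 2 * y 2

/-- Bracket [E1,E2] = 2k ξ, [E2,ξ] = −(λ+c) E1, [ξ,E1] = (λ−c) E2. -/
def br (k lam c : ℝ) (x y : Fin 3 → ℝ) : Fin 3 → ℝ :=
  ![2 * k * (x 1 * y 2 - x 2 * y 1),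
    (lam + c) * (x 0 * y 2 - x 2 * y 0),
    (lam - c) * (x 0 * y 1 - x 1 * y 0)]

section LeviCivita

variable (k lam c : ℝ)

def leviCivita (X Y : Fin 3 → ℝ) : Fin 3 → ℝ :=
  ![(k + lam) * X 1 * Y 2 + (lam - k) * X 2 * Y 1,
    (k + c) * X 0 * Y 2 + (k - lam) * X 2 * Y 0,
    -(k + c) * X 0 * Y 1 - (k + lam) * X 1 * Y 0]

def curvature (X Y Z : Fin 3 → ℝ) : Fin 3 → ℝ :=
  leviCivita k lam c X (leviCivita k lam c Y Z) - leviCivita k lam c Y (leviCivita k lam c X Z) -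
    leviCivita k lam c (br k lam c X Y) Z

lemma eq_leviCivita_of_koszul (nabla : (Fin 3 → ℝ) → (Fin 3 → ℝ) → (Fin 3 → ℝ))
    (hK : ∀ X Y Z, 2 * ip (nabla X Y) Z =
      ip (br k lam c X Y) Z - ip (br k lam c Y Z) X + ip (br k lam c Z X) Y) :
    nabla = leviCivita k lam c := by
  ext X Y i
  have hξ := hK X Y ξ
  have hE1 := hK X Y E1
  have hE2 := hK X Y E2
  simp only [ip, br, ξ, E1, E2, Matrix.cons_val_zero, Matrix.cons_val_one, Matrix.cons_val_two,
    Matrix.head_cons, Matrix.tail_cons] at hξ hE1 hE2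
  fin_cases i <;> simp [leviCivita] <;> linarith

lemma ricci_curvature_apply (X : Fin 3 → ℝ) :
    ip (curvature k lam c ξ X X) ξ + ip (curvature k lam c E1 X X) E1 +
        ip (curvature k lam c E2 X X) E2 =
      2 * (k ^ 2 - lam ^ 2) * X 0 ^ 2 - 2 * (k + c) * (k - lam) * X 1 ^ 2 -
        2 * (k + c) * (k + lam) * X 2 ^ 2 := by
  simp only [ip, curvature, leviCivita, br, ξ, E1, E2, Pi.sub_apply,
    Matrix.cons_val_zero, Matrix.cons_val_one, Matrix.cons_val_two, Matrix.head_cons,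
    Matrix.tail_cons]
  ring

end LeviCivita

/-- Principal Ricci curvatures Ric(ξ,ξ) = 2(k²−λ²), Ric(E1,E1) = −2(k+c)(k−λ),
Ric(E2,E2) = −2(k+c)(k+λ), and scalar curvature −2(k²+λ²) − 4kc. -/
theorem ricci_of_unimodular_frame (k lam c : ℝ)
    (nabla : (Fin 3 → ℝ) → (Fin 3 → ℝ) → (Fin 3 → ℝ))
    (hK : ∀ X Y Z, 2 * ip (nabla X Y) Z =
      ip (br k lam c X Y) Z - ip (br k lam c Y Z) X + ip (br k lam c Z X) Y)
    (R : (Fin 3 → ℝ) → (Fin 3 → ℝ) → (Fin 3 → ℝ) → (Fin 3 → ℝ))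
    (hR : ∀ X Y Z, R X Y Z =
      nabla X (nabla Y Z) - nabla Y (nabla X Z) - nabla (br k lam c X Y) Z)
    (Ric : (Fin 3 → ℝ) → ℝ)
    (hRic : ∀ X, Ric X = ip (R ξ X X) ξ + ip (R E1 X X) E1 + ip (R E2 X X) E2) :
    Ric ξ = 2 * (k ^ 2 - lam ^ 2) ∧
    Ric E1 = -2 * (k + c) * (k - lam) ∧
    Ric E2 = -2 * (k + c) * (k + lam) ∧
    Ric ξ + Ric E1 + Ric E2 = -2 * (k ^ 2 + lam ^ 2) - 4 * k * c := by
  obtain rfl := eq_leviCivita_of_koszul k lam c nabla hK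
  have hRc : R = curvature k lam c := funext fun X => funext fun Y => funext (hR X Y)
  have hRic_form : ∀ X, Ric X = 2 * (k ^ 2 - lam ^ 2) * X 0 ^ 2 -
      2 * (k + c) * (k - lam) * X 1 ^ 2 - 2 * (k + c) * (k + lam) * X 2 ^ 2 := by
    intro X
    rw [hRic, hRc, ricci_curvature_apply]
  simp only [hRic_form, ξ, E1, E2, Matrix.cons_val_zero, Matrix.cons_val_one,
    Matrix.cons_val_two, Matrix.head_cons, Matrix.tail_cons]
  refine ⟨?_, ?_, ?_, ?_⟩ <;> ring
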